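/- arXiv:math/0208224 — 8 statements merged into one kernel-verified Lean document; each statement's English description precedes it below -/
import Mathlib

section
/- If a set of reals X satisfies S1(B,B) (for each sequence of countable Borel covers of X one can select one member from each so that the selections cover X), then every subset Y of X also satisfies S1(B,B). -/
/-- `U` is a countable Borel cover of `X`: an ℕ-indexed family of Borel sets whose
union contains `X`, no single member of which contains `X`. -/
def IsCtblBorelCover (X : Set ℝ) (U : ℕ → Set ℝ) : Prop :=
  (∀ n, MeasurableSet (U n)) ∧ X ⊆ ⋃ n, U n ∧ ∀ n, ¬ X ⊆ U n

/-- The selection principle S1(B,B). -/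
def S1BB (X : Set ℝ) : Prop :=
  ∀ U : ℕ → ℕ → Set ℝ, (∀ n, IsCtblBorelCover X (U n)) →
    ∃ f : ℕ → ℕ, X ⊆ ⋃ n, U n (f n)

/-! A countable Borel cover `U` of `Y ⊆ X` becomes one of `X` once the Borel set `(⋃ j, U j)ᶜ`
is added to every member; on `Y` the new members agree with the old ones, so a selection for
the enlarged covers of `X` is a selection for the covers of `Y`. -/

def enlargeByComplUnion {α : Type*} (U : ℕ → Set α) (k : ℕ) : Set α :=
  U k ∪ (⋃ j, U j)ᶜ

theorem iUnion_enlargeByComplUnion {α : Type*} (U : ℕ → Set α) :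
    ⋃ k, enlargeByComplUnion U k = Set.univ := by
  simp only [enlargeByComplUnion, ← Set.iUnion_union, Set.union_compl_self]

theorem mem_of_mem_enlargeByComplUnion {α : Type*} {U : ℕ → Set α} {x : α} {k : ℕ}
    (hx : x ∈ ⋃ j, U j) (hk : x ∈ enlargeByComplUnion U k) : x ∈ U k :=
  hk.resolve_right (not_not_intro hx)

theorem IsCtblBorelCover.enlargeByComplUnion {X Y : Set ℝ} {U : ℕ → Set ℝ} (hXY : Y ⊆ X)
    (hU : IsCtblBorelCover Y U) : IsCtblBorelCover X (enlargeByComplUnion U) := by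
  obtain ⟨hmeas, hcov, hnot⟩ := hU
  refine ⟨fun k => (hmeas k).union (MeasurableSet.iUnion hmeas).compl, ?_, fun k hk => ?_⟩
  · simp only [iUnion_enlargeByComplUnion, Set.subset_univ]
  · exact hnot k fun y hy => mem_of_mem_enlargeByComplUnion (hcov hy) (hk (hXY hy))

theorem stmt0 (X Y : Set ℝ) (hXY : Y ⊆ X) (hX : S1BB X) : S1BB Y := by
  intro U hU
  obtain ⟨f, hf⟩ := hX (fun n => enlargeByComplUnion (U n))
    fun n => (hU n).enlargeByComplUnion hXY
  refine ⟨f, fun y hy => ?_⟩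
  obtain ⟨n, hn⟩ := Set.mem_iUnion.mp (hf (hXY hy))
  exact Set.mem_iUnion.mpr ⟨n, mem_of_mem_enlargeByComplUnion ((hU n).2.1 hy) hn⟩
end

section
/- If X satisfies S1(B_Γ, B_Γ) — for every sequence of countable Borel γ-covers of X one can pick one member from each so that the chosen sequence is a γ-cover of X — then every subset of X satisfies S1(B_Γ, B_Γ). -/
open Filter

/-- `U` is a countable Borel γ-cover of `X`: each member is Borel, no member
contains `X`, and every point of `X` lies in all but finitely many members. -/
def IsBorelGammaCover (X : Set ℝ) (U : ℕ → Set ℝ) : Prop :=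
  (∀ n, MeasurableSet (U n)) ∧ (∀ n, ¬ X ⊆ U n) ∧
    ∀ x ∈ X, ∀ᶠ n in atTop, x ∈ U n

/-- The selection principle S1(B_Γ, B_Γ). -/
def S1BGBG (X : Set ℝ) : Prop :=
  ∀ U : ℕ → ℕ → Set ℝ, (∀ n, IsBorelGammaCover X (U n)) →
    ∃ f : ℕ → ℕ, IsBorelGammaCover X (fun n => U n (f n))

/-! A γ-cover `U` of `Y` is contained in the Borel set `B = liminf U`. Adding `Bᶜ` to every member
turns `U` into a γ-cover of any `X ⊇ Y`: points outside `B` lie in every new member, points of `B`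
in almost all, and a point of `Y` missed by `U k` is still missed by `U k ∪ Bᶜ`. A selection from
these enlarged covers of `X` is then, on `Y ⊆ B`, a selection from the original covers of `Y`. -/

namespace IsBorelGammaCover

variable {X Y : Set ℝ} {U : ℕ → Set ℝ}

theorem subset_liminf (hU : IsBorelGammaCover Y U) : Y ⊆ liminf U atTop :=
  fun y hy => mem_liminf_iff_eventually_mem.2 (hU.2.2 y hy)

theorem union_compl_liminf (hU : IsBorelGammaCover Y U) (hYX : Y ⊆ X) :
    IsBorelGammaCover X (fun k => U k ∪ (liminf U atTop)ᶜ) := by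
  refine ⟨fun k => (hU.1 k).union (MeasurableSet.measurableSet_liminf hU.1).compl, fun k hXk => ?_,
    fun x _ => ?_⟩
  · obtain ⟨y, hy, hyk⟩ := Set.not_subset.1 (hU.2.1 k)
    exact hyk ((hXk (hYX hy)).resolve_right fun h => h (hU.subset_liminf hy))
  · by_cases hx : x ∈ liminf U atTop
    · exact (mem_liminf_iff_eventually_mem.1 hx).mono fun k hk => Or.inl hk
    · exact .of_forall fun k => Or.inr hx

end IsBorelGammaCover

theorem stmt2 (X Y : Set ℝ) (hXY : Y ⊆ X) (hX : S1BGBG X) : S1BGBG Y := by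
  intro U hU
  obtain ⟨f, hf⟩ := hX _ fun n => (hU n).union_compl_liminf hXY
  refine ⟨f, fun n => (hU n).1 (f n), fun n => (hU n).2.1 (f n), fun y hy => ?_⟩
  exact (hf.2.2 y (hXY hy)).mono fun n hn =>
    hn.resolve_right fun h => h ((hU n).subset_liminf hy)
end

section
/- Let J be a collection of subsets of ℝ that is closed under taking subsets and under taking continuous images (if A ∈ J and f : A → ℝ is continuous then f[A] ∈ J). If the closed unit interval [0,1] belongs to J, then J = P(ℝ), i.e. every subset of ℝ belongs to J. -/
open Real Set

/-- Stretching `(0, 1)` onto `(-π/2, π/2)` and applying `tan` maps it onto `ℝ`. -/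
theorem univ_mem_of_Ioo_zero_one_mem {J : Set (Set ℝ)}
    (himg : ∀ A : Set ℝ, A ∈ J → ∀ f : ℝ → ℝ, ContinuousOn f A → f '' A ∈ J)
    (h : Ioo (0 : ℝ) 1 ∈ J) : univ ∈ J := by
  have hstretch : (π * · + -(π / 2)) '' Ioo (0 : ℝ) 1 = Ioo (-(π / 2)) (π / 2) := by
    rw [image_affine_Ioo pi_pos]
    congr 1 <;> ring
  have hhalf : Ioo (-(π / 2)) (π / 2) ∈ J :=
    hstretch ▸ himg _ h _ (by fun_prop)
  exact image_tan_Ioo ▸ himg _ hhalf tan continuousOn_tan_Ioo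

theorem stmt3 (J : Set (Set ℝ))
    (hsub : ∀ A B : Set ℝ, A ∈ J → B ⊆ A → B ∈ J)
    (himg : ∀ A : Set ℝ, A ∈ J → ∀ f : ℝ → ℝ, ContinuousOn f A → f '' A ∈ J)
    (hunit : Set.Icc (0 : ℝ) 1 ∈ J) :
    J = Set.univ := by
  have huniv : univ ∈ J :=
    univ_mem_of_Ioo_zero_one_mem himg (hsub _ _ hunit Ioo_subset_Icc_self)
  exact eq_univ_of_forall fun A => hsub _ _ huniv (subset_univ A)
end

section
/- Let ℕ* be the one-point compactification of ℕ, and let Inc ⊆ (ℕ*)^ℕ be the set of nondecreasing functions f : ℕ → ℕ* such that whenever f(n) < ∞ one has f(n) < f(n+1). Then Inc, with the product topology, is a compact, zero-dimensional, metrizable space with no isolated points; consequently Inc is homeomorphic to the Cantor space {0,1}^ℕ. -/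
open OnePoint

/-- `a ≤ b` in `ℕ ∪ {∞}`: whenever `b` is a natural number `m`,
`a` is a natural number `m' ≤ m` (everything is `≤ ∞`). -/
def opLE (a b : OnePoint ℕ) : Prop :=
  ∀ m : ℕ, b = (m : OnePoint ℕ) → ∃ m' : ℕ, a = (m' : OnePoint ℕ) ∧ m' ≤ m

/-- `a < b` in `ℕ ∪ {∞}`, for `a` a natural number: whenever `b` is a natural
number `m`, `a` is a natural number `m' < m`. -/
def opLT (a b : OnePoint ℕ) : Prop :=
  ∀ m : ℕ, b = (m : OnePoint ℕ) → ∃ m' : ℕ, a = (m' : OnePoint ℕ) ∧ m' < m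

/-- The set of nondecreasing functions `ℕ → ℕ ∪ {∞}` which are strictly
increasing where finite. -/
def Inc : Set (ℕ → OnePoint ℕ) :=
  {f | (∀ n, opLE (f n) (f (n + 1))) ∧
       ∀ n, (∃ m : ℕ, f n = (m : OnePoint ℕ)) → opLT (f n) (f (n + 1))}

/-!
A point `g` of Cantor space `ℕ → Bool` determines the increasing enumeration of `{k | g k}`,
continued by `∞` once that set is exhausted; this is exactly an element of `Inc`, and `g` is
recovered as the indicator of its finite values. The `n`-th term equals `m` iff `g m` holds
and `g` has exactly `n` trues below `m`, a condition on finitely many coordinates, so the map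
is continuous; being a continuous bijection from a compact space onto a Hausdorff one, it is a
homeomorphism. All the claimed properties then come from Cantor space, which is perfect since
flipping a coordinate far out stays inside any basic neighbourhood.
-/

open Filter Topology

section Topology

variable {X Y : Type*} [TopologicalSpace X] [TopologicalSpace Y]

theorem OnePoint.continuous_of_isClopen_preimage_coe [DiscreteTopology X] {f : Y → OnePoint X}
    (hf : ∀ x : X, IsClopen (f ⁻¹' {(x : OnePoint X)})) : Continuous f := by
  have preimage_eq (s : Set (OnePoint X)) (hs : ∞ ∉ s) :
      f ⁻¹' s = ⋃ x ∈ ((↑) ⁻¹' s : Set X), f ⁻¹' {(x : OnePoint X)} := by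
    ext y
    simp only [Set.mem_preimage, Set.mem_iUnion, Set.mem_singleton_iff, exists_prop]
    cases f y with
    | infty => simp [hs]
    | coe x => simp
  refine continuous_def.2 fun s hs => ?_
  by_cases h : ∞ ∈ s
  · have hfin : ((↑) ⁻¹' s : Set X)ᶜ.Finite :=
      ((isOpen_iff_of_mem h).1 hs).2.finite_of_discrete
    rw [← compl_compl s, Set.preimage_compl, preimage_eq sᶜ (fun h' => h' h)]
    exact (hfin.isClosed_biUnion fun x _ => (hf x).1).isOpen_compl
  · rw [preimage_eq s h]
    exact isOpen_biUnion fun x _ => (hf x).2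

instance Pi.perfectSpace {ι : Type*} [Infinite ι] {X : ι → Type*} [∀ i, TopologicalSpace (X i)]
    [∀ i, Nontrivial (X i)] : PerfectSpace (∀ i, X i) := by
  classical
  refine perfectSpace_iff_forall_not_isolated.2 fun x => ?_
  choose y hy using fun i => exists_ne (x i)
  have : Tendsto (fun n => Function.update x n (y n)) cofinite (𝓝[≠] x) := by
    refine tendsto_nhdsWithin_iff.2 ⟨tendsto_pi_nhds.2 fun i => ?_, ?_⟩
    · refine tendsto_const_nhds.congr' ?_
      filter_upwards [(Set.finite_singleton i).eventually_cofinite_notMem] with n hn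
      exact (Function.update_of_ne (Ne.symm hn) _ _).symm
    · refine Eventually.of_forall fun n hn => hy n ?_
      simpa using congrFun hn n
  exact this.neBot

theorem Homeomorph.perfectSpace [PerfectSpace X] (e : X ≃ₜ Y) : PerfectSpace Y := by
  refine perfectSpace_iff_forall_not_isolated.2 fun y => ?_
  obtain ⟨x, rfl⟩ := e.surjective y
  have h := e.isEmbedding.map_nhdsWithin_eq {x}ᶜ x
  rw [Set.image_compl_eq e.bijective, Set.image_singleton] at h
  exact h ▸ (PerfectSpace.not_isolated x).map e

end Topology

theorem Nat.exists_count_eq_of_lt_count {p : ℕ → Prop} [DecidablePred p] {n m : ℕ}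
    (h : n < count p m) : ∃ k < m, p k ∧ count p k = n := by
  have hn : ∀ hf : (Set.ofPred p).Finite, n < hf.toFinset.card :=
    fun hf => h.trans_le (count_le_card hf m)
  exact ⟨nth p n, nth_lt_of_lt_count h, nth_mem n hn, count_nth hn⟩

theorem continuous_count_eq_true (m : ℕ) :
    Continuous fun g : ℕ → Bool => Nat.count (g · = true) m := by
  simp_rw [Nat.count_eq_card_filter_range, Finset.card_filter]
  exact continuous_finsetSum _ fun i _ =>
    (continuous_of_discreteTopology (f := fun b : Bool => if b = true then 1 else 0)).comp
      (continuous_apply i)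

open Classical in
/-- `Nat.nth` has the junk value `0` past the last `true`, hence the case split. -/
noncomputable def enumTrue (g : ℕ → Bool) (n : ℕ) : OnePoint ℕ :=
  if ∃ k, g k = true ∧ Nat.count (g · = true) k = n then (Nat.nth (g · = true) n : ℕ) else ∞

theorem enumTrue_eq_coe_iff {g : ℕ → Bool} {n m : ℕ} :
    enumTrue g n = m ↔ g m = true ∧ Nat.count (g · = true) m = n := by
  unfold enumTrue
  split_ifs with h
  · obtain ⟨k, hk, rfl⟩ := h
    rw [Nat.nth_count hk, coe_eq_coe]
    exact ⟨by rintro rfl; exact ⟨hk, rfl⟩, fun ⟨hm, hc⟩ => Nat.count_injective hk hm hc.symm⟩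
  · exact ⟨fun h' => absurd h' (infty_ne_coe m), fun hm => absurd ⟨m, hm⟩ h⟩

theorem enumTrue_lt_succ (g : ℕ → Bool) (n : ℕ) : opLT (enumTrue g n) (enumTrue g (n + 1)) := by
  intro m hm
  obtain ⟨-, hc⟩ := enumTrue_eq_coe_iff.1 hm
  obtain ⟨k, hkm, hk, hck⟩ := Nat.exists_count_eq_of_lt_count (hc ▸ n.lt_add_one : n < _)
  exact ⟨k, enumTrue_eq_coe_iff.2 ⟨hk, hck⟩, hkm⟩

theorem enumTrue_mem_Inc (g : ℕ → Bool) : enumTrue g ∈ Inc :=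
  ⟨fun n m hm => (enumTrue_lt_succ g n m hm).imp fun _ h => ⟨h.1, h.2.le⟩,
    fun n _ => enumTrue_lt_succ g n⟩

theorem continuous_enumTrue : Continuous enumTrue := by
  refine continuous_pi fun n => OnePoint.continuous_of_isClopen_preimage_coe fun m => ?_
  have : (enumTrue · n) ⁻¹' {(m : OnePoint ℕ)} =
      (fun g : ℕ → Bool => (g m, Nat.count (g · = true) m)) ⁻¹' {(true, n)} := by
    ext g
    simp [enumTrue_eq_coe_iff]
  rw [this]
  exact (isClopen_discrete _).preimage ((continuous_apply m).prodMk (continuous_count_eq_true m))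

theorem enumTrue_injective : Function.Injective enumTrue := by
  have imp {g g' : ℕ → Bool} (h : enumTrue g = enumTrue g') (k : ℕ) (hk : g k = true) :
      g' k = true :=
    (enumTrue_eq_coe_iff.1 (congrFun h _ ▸ enumTrue_eq_coe_iff.2 ⟨hk, rfl⟩)).1
  exact fun g g' h => funext fun k => Bool.eq_iff_iff.2 ⟨imp h k, imp h.symm k⟩

namespace Inc

variable {f : ℕ → OnePoint ℕ}

theorem exists_coe_lt_succ (hf : f ∈ Inc) {j b : ℕ} (hj : f (j + 1) = b) :
    ∃ a : ℕ, f j = a ∧ a < b :=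
  hf.2 j ((hf.1 j b hj).imp fun _ h => h.1) b hj

theorem exists_coe_lt_of_lt (hf : f ∈ Inc) {i j b : ℕ} (hij : i < j) (hj : f j = b) :
    ∃ a : ℕ, f i = a ∧ a < b := by
  induction j, hij using Nat.le_induction generalizing b with
  | base => exact exists_coe_lt_succ hf hj
  | succ j _ ih =>
    obtain ⟨c, hc, hcb⟩ := exists_coe_lt_succ hf hj
    obtain ⟨a, ha, hac⟩ := ih hc
    exact ⟨a, ha, hac.trans hcb⟩

theorem lt_iff_lt_of_eq_coe (hf : f ∈ Inc) {i j a b : ℕ} (hi : f i = a) (hj : f j = b) :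
    a < b ↔ i < j := by
  constructor
  · intro hab
    by_contra! hji
    rcases hji.lt_or_eq with hji | rfl
    · obtain ⟨c, hc, hca⟩ := exists_coe_lt_of_lt hf hji hi
      rw [hj, coe_eq_coe] at hc
      omega
    · rw [hi, coe_eq_coe] at hj
      omega
  · intro hij
    obtain ⟨c, hc, hcb⟩ := exists_coe_lt_of_lt hf hij hj
    rw [hi, coe_eq_coe] at hc
    omega

theorem count_eq_of_eq_coe (hf : f ∈ Inc) {p : ℕ → Prop} [DecidablePred p]
    (hp : ∀ k, p k ↔ ∃ i, f i = k) {n k : ℕ} (hk : f n = k) : Nat.count p k = n := by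
  induction n generalizing k with
  | zero =>
    refine Nat.count_of_forall_not fun j hjk hj => ?_
    obtain ⟨i, hi⟩ := (hp j).1 hj
    exact Nat.not_lt_zero i ((lt_iff_lt_of_eq_coe hf hi hk).1 hjk)
  | succ n ih =>
    obtain ⟨a, ha, hak⟩ := exists_coe_lt_succ hf hk
    have hgap : ∀ x ∈ Set.Ico (a + 1) k, ¬ p x := by
      rintro x ⟨hax, hxk⟩ hx
      obtain ⟨i, hi⟩ := (hp x).1 hx
      have := (lt_iff_lt_of_eq_coe hf ha hi).1 hax
      have := (lt_iff_lt_of_eq_coe hf hi hk).1 hxk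
      omega
    have hle : Nat.count p k ≤ Nat.count p (a + 1) := not_lt.1 fun h =>
      let ⟨x, hx, hpx⟩ := Nat.exists_of_count_lt_count h
      hgap x hx hpx
    have hge := Nat.count_monotone p hak
    rw [Nat.count_succ_eq_succ_count ((hp a).2 ⟨n, ha⟩), ih ha] at hle hge
    omega

theorem exists_enumTrue_eq (hf : f ∈ Inc) : ∃ g, enumTrue g = f := by
  classical
  have hp (k : ℕ) : decide (∃ i, f i = k) = true ↔ ∃ i, f i = k := decide_eq_true_iff
  refine ⟨fun k => decide (∃ i, f i = k), funext fun n => ?_⟩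
  cases hn : f n with
  | coe k => exact enumTrue_eq_coe_iff.2 ⟨(hp k).2 ⟨n, hn⟩, count_eq_of_eq_coe hf hp hn⟩
  | infty =>
    cases he : enumTrue _ n with
    | infty => rfl
    | coe k =>
      obtain ⟨hk, hc⟩ := enumTrue_eq_coe_iff.1 he
      obtain ⟨i, hi⟩ := (hp k).1 hk
      rw [count_eq_of_eq_coe hf hp hi] at hc
      rw [hc, hn] at hi
      exact absurd hi (infty_ne_coe k)

end Inc

noncomputable def enumTrueHomeomorph : (ℕ → Bool) ≃ₜ Inc :=
  Continuous.homeoOfEquivCompactToT2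
    (f := Equiv.ofBijective (fun g => ⟨enumTrue g, enumTrue_mem_Inc g⟩)
      ⟨fun _ _ h => enumTrue_injective (congrArg Subtype.val h),
        fun f => (Inc.exists_enumTrue_eq f.2).imp fun _ h => Subtype.ext h⟩)
    (continuous_enumTrue.subtype_mk _)

theorem stmt6 :
    CompactSpace ↥Inc ∧ TotallyDisconnectedSpace ↥Inc ∧
    TopologicalSpace.MetrizableSpace ↥Inc ∧
    (∀ x : ↥Inc, (nhdsWithin x {x}ᶜ).NeBot) ∧
    Nonempty (↥Inc ≃ₜ (ℕ → Bool)) := by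
  have : PerfectSpace Inc := enumTrueHomeomorph.perfectSpace
  exact ⟨enumTrueHomeomorph.compactSpace, enumTrueHomeomorph.totallyDisconnectedSpace,
    enumTrueHomeomorph.symm.isEmbedding.metrizableSpace, PerfectSpace.not_isolated,
    ⟨enumTrueHomeomorph.symm⟩⟩
end

section
/- Let Inc be the space of nondecreasing functions ℕ → ℕ ∪ {∞} strictly increasing where finite (a compact subspace of (ℕ∪{∞})^ℕ), and let Q ⊆ Inc be the set of eventually-∞ elements. If A ⊆ Inc ∩ ℕ^ℕ is strongly unbounded with |A| = κ, then A is κ-concentrated on Q: for every open set U ⊇ Q in Inc, |A \ U| < κ. -/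
open Filter OnePoint

/-- The set of eventually-∞ elements of `Inc`. -/
def Qinf : Set (ℕ → OnePoint ℕ) :=
  {f ∈ Inc | ∀ᶠ n in atTop, f n = (∞ : OnePoint ℕ)}

def LeStar (f g : ℕ → ℕ) : Prop := ∀ᶠ n in atTop, f n ≤ g n

/-!
`Inc` is closed in the compact space `(ℕ ∪ {∞})^ℕ`, so `Inc \ U` is compact. An element of `Inc`
that takes the value `∞` once is `∞` from then on, so an element of `Inc` outside `Q` is finite
everywhere. Each coordinate projection therefore maps `Inc \ U ⊆ Inc \ Q` onto a compact, hence
finite, subset of `ℕ`, and a single `b : ℕ → ℕ` bounds `Inc \ U` everywhere. The elements of `A`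
outside `U` are thus all `≤* b`, and there are fewer than `|A|` of those.
-/

open Set

namespace OnePoint

variable {X : Type*} [TopologicalSpace X] [DiscreteTopology X]

lemma isClopen_image_coe_of_finite {s : Set X} (hs : s.Finite) :
    IsClopen ((↑) '' s : Set (OnePoint X)) :=
  ⟨isClosed_image_coe.2 ⟨isClosed_discrete s, hs.isCompact⟩, isOpen_image_coe.2 (isOpen_discrete s)⟩

lemma isOpen_singleton_coe (x : X) : IsOpen ({(x : OnePoint X)} : Set (OnePoint X)) := by
  simpa only [image_singleton] using isOpen_image_coe.2 (isOpen_discrete {x})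

lemma finite_preimage_coe_of_isCompact {S : Set (OnePoint X)} (hS : IsCompact S) (h : ∞ ∉ S) :
    ((↑) ⁻¹' S : Set X).Finite :=
  (isOpenEmbedding_coe.isInducing.isCompact_preimage' hS fun _ hx =>
    ne_infty_iff_exists.1 (ne_of_mem_of_not_mem hx h)).finite_of_discrete

end OnePoint

lemma mem_Inc_iff {f : ℕ → OnePoint ℕ} :
    f ∈ Inc ↔ ∀ n m : ℕ, (f (n + 1) = m → f n ∈ (↑) '' Iic m) ∧
      (f n = m → f (n + 1) ∉ (↑) '' Iic m) := by
  simp only [Inc, opLE, opLT, mem_ofPred_eq, mem_image, mem_Iic, forall_and]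
  refine and_congr (forall₂_congr fun n m => imp_congr_right fun _ =>
    exists_congr fun _ => and_comm.trans (and_congr_right fun _ => eq_comm)) ?_
  refine forall_congr' fun n => ⟨fun h m hm => ?_, fun h ⟨m, hm⟩ k hk => ?_⟩
  · rintro ⟨k, hkm, hk⟩
    obtain ⟨m', hm', hlt⟩ := h ⟨m, hm⟩ k hk.symm
    rw [hm, coe_injective.eq_iff] at hm'
    omega
  · exact ⟨m, hm, not_le.1 fun hkm => h m hm ⟨k, hkm, hk.symm⟩⟩

lemma isClosed_Inc : IsClosed Inc := by
  have hT (m : ℕ) : IsClopen ((↑) '' Iic m : Set (OnePoint ℕ)) :=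
    OnePoint.isClopen_image_coe_of_finite (finite_Iic m)
  have hev (n : ℕ) : Continuous fun f : ℕ → OnePoint ℕ => f n := continuous_apply n
  rw [show Inc = {f | _} from Set.ext fun _ => mem_Inc_iff]
  simp only [ofPred_forall, ofPred_and]
  exact isClosed_iInter fun n => isClosed_iInter fun m =>
    (isClosed_imp ((OnePoint.isOpen_singleton_coe m).preimage (hev (n + 1)))
      ((hT m).isClosed.preimage (hev n))).inter
    (isClosed_imp ((OnePoint.isOpen_singleton_coe m).preimage (hev n))
      ((hT m).isOpen.preimage (hev (n + 1))).isClosed_compl)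

lemma eq_infty_of_mem_Inc_of_le {f : ℕ → OnePoint ℕ} (hf : f ∈ Inc) {n k : ℕ} (hnk : n ≤ k)
    (hn : f n = ∞) : f k = ∞ := by
  induction k, hnk using Nat.le_induction with
  | base => exact hn
  | succ k _ ih =>
    by_contra hk
    obtain ⟨m, hm⟩ := OnePoint.ne_infty_iff_exists.1 hk
    obtain ⟨m', hm', -⟩ := hf.1 k m hm.symm
    exact OnePoint.coe_ne_infty m' (hm' ▸ ih)

lemma ne_infty_of_mem_Inc_of_notMem_Qinf {f : ℕ → OnePoint ℕ} (hf : f ∈ Inc) (hQ : f ∉ Qinf)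
    (n : ℕ) : f n ≠ ∞ := fun hn =>
  hQ ⟨hf, Filter.eventually_atTop.2 ⟨n, fun _ hk => eq_infty_of_mem_Inc_of_le hf hk hn⟩⟩

lemma exists_bound_of_isCompact {K : Set (ℕ → OnePoint ℕ)} (hK : IsCompact K)
    (hfin : ∀ x ∈ K, ∀ n, x n ≠ ∞) : ∃ b : ℕ → ℕ, ∀ x ∈ K, ∀ n (m : ℕ), x n = m → m ≤ b n := by
  choose b hb using fun n => (OnePoint.finite_preimage_coe_of_isCompact
    (hK.image (continuous_apply n)) fun ⟨x, hx, hxn⟩ => hfin x hx n hxn).bddAbove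
  exact ⟨b, fun x hx n m hm => hb n ⟨x, hx, hm⟩⟩

theorem stmt10 (A : Set (ℕ → ℕ))
    (hAInc : ∀ a ∈ A, (fun n => ((a n : ℕ) : OnePoint ℕ)) ∈ Inc)
    (hsu : ∀ f : ℕ → ℕ, Cardinal.mk ↥{g ∈ A | LeStar g f} < Cardinal.mk ↥A) :
    ∀ U : Set (ℕ → OnePoint ℕ), IsOpen U → Qinf ⊆ U →
      Cardinal.mk ↥{a ∈ A | (fun n => ((a n : ℕ) : OnePoint ℕ)) ∉ U} <
        Cardinal.mk ↥A := by
  intro U hU hQU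
  obtain ⟨b, hb⟩ := exists_bound_of_isCompact (isClosed_Inc.isCompact.diff hU) fun x hx =>
    ne_infty_of_mem_Inc_of_notMem_Qinf hx.1 fun hxQ => hx.2 (hQU hxQ)
  have hsub : {a ∈ A | (fun n => ((a n : ℕ) : OnePoint ℕ)) ∉ U} ⊆ {g ∈ A | LeStar g b} :=
    fun a ⟨haA, haU⟩ => ⟨haA, Eventually.of_forall fun n => hb _ ⟨hAInc a haA, haU⟩ n (a n) rfl⟩
  exact (Cardinal.mk_le_mk_of_subset hsub).trans_lt (hsu b)
end

section
/- Let X be a set of reals, Q = {q_n : n ∈ ℕ} a countable subset of X, κ a cardinal, and A = X \ Q. Suppose that for every open U ⊇ Q we have |A \ U| < κ, and suppose every set of reals of size < κ satisfies S1(𝒜, O) for a family 𝒜 of open covers with the property that each cover in 𝒜 is a cover by open sets of its target set. Then X = A ∪ Q satisfies S1(𝒜, O), where 𝒜 consists of γ-covers (or more generally any type of open covers that restrict to covers of subsets). -/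
/-!
Cover the countable part `Q` point by point with the even-indexed covers: the chosen sets form an
open set `V ⊇ Q`, so by concentration the remainder `(X \ Q) \ V` has size `< κ` and is covered by
selecting from the odd-indexed covers, restricted to it. Interleaving the two selections covers `X`.
-/

/-- The selection principle `S1(𝒜, O)` for the class of covers `P`:
`P Z` is the collection of ℕ-indexed covers of `Z` belonging to the class. -/
def S1Cls (P : Set ℝ → Set (ℕ → Set ℝ)) (Z : Set ℝ) : Prop :=
  ∀ U : ℕ → ℕ → Set ℝ, (∀ n, U n ∈ P Z) → ∃ f : ℕ → ℕ, Z ⊆ ⋃ n, U n (f n)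

open Set

lemma exists_selection_covering_of_countable {α : Type*} {Q Z : Set α} (hQ : Q.Countable)
    (hQZ : Q ⊆ Z) (U : ℕ → ℕ → Set α) (hU : ∀ n, Z ⊆ ⋃ k, U n k) :
    ∃ f : ℕ → ℕ, Q ⊆ ⋃ n, U n (f n) := by
  rcases Q.eq_empty_or_nonempty with rfl | ⟨x, -⟩
  · exact ⟨0, empty_subset _⟩
  have : Nonempty α := ⟨x⟩
  obtain ⟨q, hq⟩ := countable_iff_exists_subset_range.mp hQ
  have hpick : ∀ n, ∃ k, q n ∈ Z → q n ∈ U n k := fun n => by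
    by_cases hqn : q n ∈ Z
    · obtain ⟨k, hk⟩ := mem_iUnion.mp (hU n hqn)
      exact ⟨k, fun _ => hk⟩
    · exact ⟨0, fun h => absurd h hqn⟩
  choose f hf using hpick
  refine ⟨f, fun x hx => ?_⟩
  obtain ⟨n, rfl⟩ := hq hx
  exact mem_iUnion.mpr ⟨n, hf n (hQZ hx)⟩

lemma exists_interleave {β : Type*} (f g : ℕ → β) :
    ∃ h : ℕ → β, (∀ n, h (2 * n) = f n) ∧ ∀ n, h (2 * n + 1) = g n :=
  ⟨fun m => if m % 2 = 0 then f (m / 2) else g (m / 2),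
    fun n => by simp [Nat.mul_div_cancel_left n two_pos],
    fun n => by simp [Nat.add_mod, show (2 * n + 1) / 2 = n by omega]⟩

lemma exists_selection_superset_even_union_odd {α : Type*} (U : ℕ → ℕ → Set α) (f g : ℕ → ℕ) :
    ∃ h : ℕ → ℕ, (⋃ n, U (2 * n) (f n)) ∪ (⋃ n, U (2 * n + 1) (g n)) ⊆ ⋃ m, U m (h m) := by
  obtain ⟨h, h_even, h_odd⟩ := exists_interleave f g
  refine ⟨h, union_subset (iUnion_subset fun n => ?_) (iUnion_subset fun n => ?_)⟩
  · exact (h_even n ▸ subset_iUnion (fun m => U m (h m)) (2 * n))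
  · exact (h_odd n ▸ subset_iUnion (fun m => U m (h m)) (2 * n + 1))

theorem stmt12 (P : Set ℝ → Set (ℕ → Set ℝ)) (X Q : Set ℝ) (κ : Cardinal)
    (hQX : Q ⊆ X) (hQc : Q.Countable)
    -- X is κ-concentrated on Q:
    (hconc : ∀ U : Set ℝ, IsOpen U → Q ⊆ U → Cardinal.mk ↥((X \ Q) \ U) < κ)
    -- each cover in the class is a cover of its target set by open sets:
    (hPopen : ∀ Z : Set ℝ, ∀ U ∈ P Z, (∀ n, IsOpen (U n)) ∧ Z ⊆ ⋃ n, U n)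
    -- covers in the class restrict to covers of subsets:
    (hPmono : ∀ Z W : Set ℝ, W ⊆ Z → ∀ U ∈ P Z, U ∈ P W)
    -- every set of reals of size < κ satisfies S1(𝒜, O):
    (hsmall : ∀ W : Set ℝ, Cardinal.mk ↥W < κ → S1Cls P W) :
    S1Cls P X := by
  intro U hU
  obtain ⟨g, hQV⟩ := exists_selection_covering_of_countable hQc hQX (fun n => U (2 * n))
    fun n => (hPopen X _ (hU (2 * n))).2
  set V := ⋃ n, U (2 * n) (g n)
  have hVopen : IsOpen V := isOpen_iUnion fun n => (hPopen X _ (hU (2 * n))).1 _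
  have hrest_sub : (X \ Q) \ V ⊆ X := sdiff_subset.trans sdiff_subset
  obtain ⟨f, hrest⟩ := hsmall _ (hconc V hVopen hQV) (fun n => U (2 * n + 1))
    fun n => hPmono X _ hrest_sub _ (hU (2 * n + 1))
  obtain ⟨h, hh⟩ := exists_selection_superset_even_union_odd U g f
  refine ⟨h, fun x hx => hh ?_⟩
  by_cases hxV : x ∈ V
  · exact Or.inl hxV
  · exact Or.inr (hrest ⟨⟨hx, fun hxQ => hxV (hQV hxQ)⟩, hxV⟩)
end

section
/- There exists a dominating family D = {g_α : α < 𝔡} ⊆ ℕ^ℕ of increasing functions such that for each f ∈ ℕ^ℕ there is α₀ < 𝔡 with the property: for every finite set F ⊆ 𝔡 \ α₀, the set {n : f(n) < min{g_β(n) : β ∈ F}} is infinite. -/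
open Filter

def Dominating (D : Set (ℕ → ℕ)) : Prop := ∀ g : ℕ → ℕ, ∃ f ∈ D, LeStar g f

/-- The dominating number 𝔡. -/
noncomputable def dCard : Cardinal :=
  sInf {c : Cardinal | ∃ D : Set (ℕ → ℕ), Dominating D ∧ Cardinal.mk ↥D = c}

/-! Enumerate a dominating family of size `𝔡` as `(h γ)_{γ < 𝔡}`. Fewer than `𝔡` functions never
dominate, so for fewer than `𝔡` infinite sets `X i` and functions `h i` there is a single `x` with
`h i < x` infinitely often on each `X i` (apply this to `h i` composed with the enumeration of `X i`
and take a monotone majorant). By transfinite recursion, choose `c ρ` in this way for all the sets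
`{n | ∀ β ∈ F, h γ n < c β n}` with `γ ≤ ρ` and `F ⊆ [0, ρ)` finite; induction on `max F` then shows
that these sets are infinite whenever `γ ≤ F`. Finally `g β` is a strictly increasing majorant of
`max (h β) (c β)`, and for `f ≤* h γ` one takes `α₀ = γ`. -/

open Set Cardinal

lemma exists_dominating_mk_eq_dCard : ∃ D : Set (ℕ → ℕ), Dominating D ∧ #D = dCard :=
  csInf_mem (s := {c | ∃ D : Set (ℕ → ℕ), Dominating D ∧ #D = c})
    ⟨_, univ, fun g => ⟨g, trivial, .of_forall fun _ => le_rfl⟩, rfl⟩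

lemma dCard_le_mk_of_dominating {D : Set (ℕ → ℕ)} (hD : Dominating D) : dCard ≤ #D :=
  csInf_le' ⟨D, hD, rfl⟩

lemma not_dominating_of_countable {D : Set (ℕ → ℕ)} (hD : D.Countable) : ¬ Dominating D := by
  intro hdom
  obtain ⟨d₀, hd₀, -⟩ := hdom 0
  obtain ⟨u, rfl⟩ := hD.exists_eq_range ⟨d₀, hd₀⟩
  obtain ⟨_, ⟨i, rfl⟩, hle⟩ := hdom fun n => (Finset.range (n + 1)).sup (fun i => u i n) + 1
  obtain ⟨n, hin, hn⟩ := ((eventually_ge_atTop i).and hle).exists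
  have : u i n ≤ (Finset.range (n + 1)).sup (fun i => u i n) :=
    Finset.le_sup (f := fun i => u i n) (Finset.mem_range_succ_iff.mpr hin)
  simp only at hn
  omega

lemma aleph0_lt_dCard : ℵ₀ < dCard := by
  obtain ⟨D, hD, hmk⟩ := exists_dominating_mk_eq_dCard
  rw [← hmk, ← not_le, mk_le_aleph0_iff, countable_coe_iff]
  exact fun hc => not_dominating_of_countable hc hD

lemma mk_finset_lt_dCard {ι : Type} (hι : #ι < dCard) : #(Finset ι) < dCard := by
  cases finite_or_infinite ι
  · exact (lt_aleph0_of_finite _).trans aleph0_lt_dCard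
  · rwa [mk_finset_of_infinite]

lemma exists_frequently_lt_of_mk_lt_dCard {ι : Type} (hι : #ι < dCard) (G : ι → ℕ → ℕ) :
    ∃ c : ℕ → ℕ, ∀ i, ∃ᶠ n in atTop, G i n < c n := by
  by_contra! hcon
  have hdom : Dominating (range G) := fun c =>
    let ⟨i, hi⟩ := hcon c
    ⟨G i, mem_range_self i, hi⟩
  exact (dCard_le_mk_of_dominating hdom).trans mk_range_le |>.not_gt hι

lemma exists_strictMono_majorant (u : ℕ → ℕ) : ∃ v : ℕ → ℕ, StrictMono v ∧ u ≤ v := by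
  refine ⟨fun n => ∑ k ∈ Finset.range (n + 1), (u k + 1), strictMono_nat_of_lt_succ fun n => ?_,
    fun n => ?_⟩
  · rw [Finset.sum_range_succ _ (n + 1)]
    omega
  · exact (Nat.le_succ _).trans
      (Finset.single_le_sum (f := fun k => u k + 1) (by simp) (Finset.self_mem_range_succ n))

lemma exists_frequently_mem_and_lt {ι : Type} (hι : #ι < dCard) (X : ι → Set ℕ)
    (h : ι → ℕ → ℕ) :
    ∃ x : ℕ → ℕ, ∀ i, (X i).Infinite → ∃ᶠ n in atTop, n ∈ X i ∧ h i n < x n := by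
  obtain ⟨c, hc⟩ := exists_frequently_lt_of_mk_lt_dCard hι fun i j => h i (Nat.nth (· ∈ X i) j)
  obtain ⟨x, hx_mono, hcx⟩ := exists_strictMono_majorant c
  refine ⟨x, fun i hX => ?_⟩
  have hnth : StrictMono (Nat.nth (· ∈ X i)) := Nat.nth_strictMono hX
  refine hnth.tendsto_atTop.frequently ((hc i).mono fun j hj => ⟨Nat.nth_mem_of_infinite hX j, ?_⟩)
  -- the `j`-th element of `X i` is at least `j`, and `x` is monotone
  exact hj.trans_le ((hcx j).trans (hx_mono.monotone hnth.le_apply))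

section Outrun

variable {K : Type} [LinearOrder K]

lemma mk_Iic_prod_finset_Iio_lt_dCard (hK : ∀ ρ : K, #(Iio ρ) < dCard) (ρ : K) :
    #(Iic ρ × Finset (Iio ρ)) < dCard := by
  have hIic : #(Iic ρ) < dCard := by
    rw [← Iio_insert]
    exact mk_insert_le.trans_lt
      (add_lt_of_lt aleph0_lt_dCard.le (hK ρ) (one_lt_aleph0.trans aleph0_lt_dCard))
  rw [mk_prod, lift_id, lift_id]
  exact mul_lt_of_lt aleph0_lt_dCard.le hIic (mk_finset_lt_dCard (hK ρ))

variable [WellFoundedLT K] (hK : ∀ ρ : K, #(Iio ρ) < dCard) (h : K → ℕ → ℕ)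

noncomputable def outrunStep (ρ : K) (prev : ∀ β < ρ, ℕ → ℕ) : ℕ → ℕ :=
  Classical.choose <| exists_frequently_mem_and_lt (mk_Iic_prod_finset_Iio_lt_dCard hK ρ)
    (fun i => {n | ∀ β ∈ i.2, h i.1 n < prev β β.2 n}) (fun i => h i.1)

noncomputable def outrun : K → ℕ → ℕ := wellFounded_lt.fix (outrunStep hK h)

lemma outrun_eq (ρ : K) : outrun hK h ρ = outrunStep hK h ρ fun β _ => outrun hK h β :=
  wellFounded_lt.fix_eq _ _

lemma frequently_forall_lt_outrun_insert {ρ γ : K} (hγ : γ ≤ ρ) {F : Finset K}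
    (hFρ : ∀ β ∈ F, β < ρ) (hF : ∃ᶠ n in atTop, ∀ β ∈ F, h γ n < outrun hK h β n) :
    ∃ᶠ n in atTop, ∀ β ∈ insert ρ F, h γ n < outrun hK h β n := by
  classical
  set F' : Finset (Iio ρ) := F.subtype (· ∈ Iio ρ)
  have hF' : ∀ n, (∀ β ∈ F', h γ n < outrun hK h β n) ↔ ∀ β ∈ F, h γ n < outrun hK h β n :=
    fun n => ⟨fun H β hβ => H ⟨β, hFρ β hβ⟩ (Finset.mem_subtype.mpr hβ),
      fun H β hβ => H β (Finset.mem_subtype.mp hβ)⟩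
  have hstep := Classical.choose_spec (exists_frequently_mem_and_lt
    (mk_Iic_prod_finset_Iio_lt_dCard hK ρ)
    (fun i => {n | ∀ β ∈ i.2, h i.1 n < outrun hK h β n}) (fun i => h i.1))
    (⟨γ, hγ⟩, F') (by simpa only [hF'] using Nat.frequently_atTop_iff_infinite.mp hF)
  refine hstep.mono fun n ⟨hn, hρ⟩ => Finset.forall_mem_insert _ _ _ |>.mpr ⟨?_, (hF' n).mp hn⟩
  rw [outrun_eq]
  exact hρ

lemma frequently_forall_lt_outrun {γ : K} (F : Finset K) (hF : ∀ β ∈ F, γ ≤ β) :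
    ∃ᶠ n in atTop, ∀ β ∈ F, h γ n < outrun hK h β n := by
  classical
  induction F using Finset.induction_on_max with
  | empty => exact .of_forall fun _ β hβ => absurd hβ (Finset.notMem_empty β)
  | insert ρ F hlt ih =>
    exact frequently_forall_lt_outrun_insert hK h (hF ρ (Finset.mem_insert_self ρ F)) hlt
      (ih fun β hβ => hF β (Finset.mem_insert_of_mem hβ))

end Outrun

theorem stmt14 :
    ∃ g : dCard.ord.ToType → ℕ → ℕ,
      (∀ α, StrictMono (g α)) ∧
      Dominating (Set.range g) ∧
      ∀ f : ℕ → ℕ, ∃ α₀ : dCard.ord.ToType,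
        ∀ F : Finset dCard.ord.ToType, (∀ β ∈ F, α₀ ≤ β) →
          {n : ℕ | ∀ β ∈ F, f n < g β n}.Infinite := by
  obtain ⟨D, hD, hmk⟩ := exists_dominating_mk_eq_dCard
  obtain ⟨e⟩ : Nonempty (dCard.ord.ToType ≃ D) := Cardinal.eq.mp (by rw [mk_ord_toType, hmk])
  have hK (ρ : dCard.ord.ToType) : #(Iio ρ) < dCard := by simpa using mk_Iio_lt ρ
  let h : dCard.ord.ToType → ℕ → ℕ := fun γ => e γ
  choose g hg_mono hg_ge using fun β => exists_strictMono_majorant (h β ⊔ outrun hK h β)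
  have hdom (f : ℕ → ℕ) : ∃ γ, LeStar f (h γ) :=
    let ⟨d, hd, hfd⟩ := hD f
    ⟨e.symm ⟨d, hd⟩, by simpa [h] using hfd⟩
  refine ⟨g, hg_mono, fun f => ?_, fun f => ?_⟩
  · obtain ⟨γ, hfγ⟩ := hdom f
    exact ⟨g γ, mem_range_self γ, hfγ.mono fun n hn => hn.trans (le_sup_left.trans (hg_ge γ n))⟩
  · obtain ⟨γ, hfγ⟩ := hdom f
    refine ⟨γ, fun F hF => Nat.frequently_atTop_iff_infinite.mp ?_⟩
    refine ((frequently_forall_lt_outrun hK h F hF).and_eventually hfγ).mono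
      fun n ⟨hn, hfn⟩ β hβ => ?_
    exact hfn.trans_lt ((hn β hβ).trans_le (le_sup_right.trans (hg_ge β n)))
end

section
/- If 𝔟 = 𝔡, then a union of fewer than 𝔡 many non-dominating subsets of ℕ^ℕ is not dominating. -/
/-! Pick for each `i` a function `g i` that no member of `D i` eventually dominates. Fewer than
`𝔡 = 𝔟` functions form a bounded family, so some `G` eventually dominates every `g i`; a member
`f ∈ D i` of the union dominating `G` would then dominate `g i`. -/

open Filter

def BddStar (B : Set (ℕ → ℕ)) : Prop := ∃ g : ℕ → ℕ, ∀ f ∈ B, LeStar f g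

/-- The unbounding number 𝔟. -/
noncomputable def bCard : Cardinal :=
  sInf {c : Cardinal | ∃ B : Set (ℕ → ℕ), ¬ BddStar B ∧ Cardinal.mk ↥B = c}

theorem LeStar.trans {f g h : ℕ → ℕ} (hfg : LeStar f g) (hgh : LeStar g h) : LeStar f h :=
  (hfg.and hgh).mono fun _ hn => hn.1.trans hn.2

theorem not_dominating_iff {D : Set (ℕ → ℕ)} :
    ¬ Dominating D ↔ ∃ g : ℕ → ℕ, ∀ f ∈ D, ¬ LeStar g f := by
  simp only [Dominating, not_forall, not_exists, not_and]

theorem bddStar_of_mk_lt_bCard {B : Set (ℕ → ℕ)} (hB : Cardinal.mk B < bCard) : BddStar B := by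
  by_contra hB'
  exact (csInf_le' ⟨B, hB', rfl⟩ : bCard ≤ Cardinal.mk B).not_gt hB

theorem not_dominating_iUnion_of_mk_lt_bCard {ι : Type} {D : ι → Set (ℕ → ℕ)}
    (hcard : Cardinal.mk ι < bCard) (hnd : ∀ i, ¬ Dominating (D i)) :
    ¬ Dominating (⋃ i, D i) := by
  choose g hg using fun i => not_dominating_iff.mp (hnd i)
  obtain ⟨G, hG⟩ := bddStar_of_mk_lt_bCard (Cardinal.mk_range_le.trans_lt hcard)
  rw [not_dominating_iff]
  refine ⟨G, fun f hf hGf => ?_⟩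
  obtain ⟨i, hfi⟩ := Set.mem_iUnion.mp hf
  exact hg i f hfi ((hG (g i) ⟨i, rfl⟩).trans hGf)

theorem stmt15 (h : bCard = dCard) (ι : Type) (D : ι → Set (ℕ → ℕ))
    (hcard : Cardinal.mk ι < dCard) (hnd : ∀ i, ¬ Dominating (D i)) :
    ¬ Dominating (⋃ i, D i) :=
  not_dominating_iUnion_of_mk_lt_bCard (h ▸ hcard) hnd
end
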